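/- arXiv:1410.3368 — 4 statements merged into one kernel-verified Lean document; each statement's English description precedes it below -/
import Mathlib

section
/- Let T ∈ GL(m, ℚ) with m ≥ 1. If T is not elliptic (its image as a subgroup of GL(m, ℝ) is not contained in any conjugate of O(m, ℝ)), then there exists a vector v ∈ ℚ^m such that the set {‖T^k v‖ : k ∈ ℤ} is unbounded. -/
/-!
If every rational orbit of `T` is bounded, then so are the columns of the powers `Tᵏ`, so the
cyclic group generated by `T` is bounded in `GL(m, ℝ)`. The Cesàro averages of the Gram matrices
`(Tᵏ)ᴴ Tᵏ` then have a cluster point `G`, which is fixed by `M ↦ Tᴴ M T`; it is positive definite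
because `‖T⁻ᵏ‖` is bounded, so all `(Tᵏ)ᴴ Tᵏ` dominate one fixed multiple of the identity.
Writing `G = Bᴴ B`, the conjugate `B T B⁻¹` is orthogonal.
-/

open Matrix Filter Topology Bornology
open scoped ComplexOrder Matrix.Norms.L2Operator

theorem ContinuousLinearMap.exists_fixedPoint_mem_closure_convexHull_orbit {E : Type*}
    [NormedAddCommGroup E] [NormedSpace ℝ E] [ProperSpace E] (Φ : E →L[ℝ] E) (x : E)
    (hx : IsBounded (Set.range fun k : ℕ => Φ^[k] x)) :
    ∃ y ∈ closure (convexHull ℝ (Set.range fun k : ℕ => Φ^[k] x)), Φ y = y := by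
  set orbit := Set.range fun k : ℕ => Φ^[k] x
  set average : ℕ → E := fun N => ((N : ℝ) + 1)⁻¹ • ∑ k ∈ Finset.range (N + 1), Φ^[k] x
  have haverage_mem N : average N ∈ convexHull ℝ orbit := by
    simp only [average, Finset.smul_sum]
    refine (convex_convexHull ℝ orbit).sum_mem (fun _ _ => by positivity) ?_
      fun k _ => subset_convexHull ℝ orbit ⟨k, rfl⟩
    simp only [Finset.sum_const, Finset.card_range, nsmul_eq_mul, Nat.cast_add, Nat.cast_one]
    field_simp
  have hdefect N : Φ (average N) - average N = ((N : ℝ) + 1)⁻¹ • (Φ^[N + 1] x - x) := by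
    simp only [average, map_smul, map_sum, ← smul_sub, ← Finset.sum_sub_distrib,
      ← Function.iterate_succ_apply' Φ]
    rw [Finset.sum_range_sub (fun k => Φ^[k] x), Function.iterate_zero_apply]
  have hdefect_lim : Tendsto (fun N => Φ (average N) - average N) atTop (𝓝 0) := by
    simp only [hdefect]
    obtain ⟨C, hC⟩ := hx.exists_norm_le
    refine tendsto_one_div_add_atTop_nhds_zero_nat.congr (fun N => by simp)
      |>.zero_smul_isBoundedUnder_le ?_
    refine isBoundedUnder_of ⟨C + C, fun N => (norm_sub_le _ _).trans (add_le_add ?_ ?_)⟩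
    · exact hC _ ⟨N + 1, rfl⟩
    · exact hC _ ⟨0, rfl⟩
  obtain ⟨y, hy, φ, hφ, hlim⟩ := (isBounded_convexHull.mpr hx).isCompact_closure.tendsto_subseq
    fun N => subset_closure (haverage_mem N)
  refine ⟨y, hy, tendsto_nhds_unique ((Φ.continuous.tendsto y).comp hlim) ?_⟩
  simpa [Function.comp_def] using hlim.add (hdefect_lim.comp hφ.tendsto_atTop)

theorem Module.Basis.bddAbove_range_opNorm {𝕜 E F ι κ : Type*} [NontriviallyNormedField 𝕜]
    [CompleteSpace 𝕜] [NormedAddCommGroup E] [NormedSpace 𝕜 E] [NormedAddCommGroup F]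
    [NormedSpace 𝕜 F] [Fintype ι] (v : Basis ι 𝕜 E) (f : κ → E →L[𝕜] F)
    (hf : ∀ i, BddAbove (Set.range fun k => ‖f k (v i)‖)) :
    BddAbove (Set.range fun k => ‖f k‖) := by
  choose C hC using hf
  obtain ⟨D, hD⟩ := Finite.exists_le C
  exact ⟨_, Set.forall_mem_range.mpr fun k => v.opNorm_le (le_max_right D 0)
    fun i => (hC i ⟨k, rfl⟩).trans ((hD i).trans (le_max_left D 0))⟩

namespace Matrix

variable {n : Type*} [Fintype n]

theorem posDef_of_mem_closure_convexHull {S : Set (Matrix n n ℝ)} {c : ℝ} (hc : 0 < c)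
    (hS : ∀ M ∈ S, M.IsHermitian ∧ ∀ x, c * (star x ⬝ᵥ x) ≤ star x ⬝ᵥ (M *ᵥ x))
    {G : Matrix n n ℝ} (hG : G ∈ closure (convexHull ℝ S)) : G.PosDef := by
  set K := {M : Matrix n n ℝ | M.IsHermitian} ∩
    ⋂ x, {M | c * (star x ⬝ᵥ x) ≤ star x ⬝ᵥ (M *ᵥ x)}
  have hK_closed : IsClosed K :=
    (isClosed_eq continuous_id.matrix_conjTranspose continuous_id).inter
      (isClosed_iInter fun x => isClosed_le continuous_const (by fun_prop))
  have hK_convex : Convex ℝ K := by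
    refine .inter (fun M hM N hN a b _ _ _ => ?_) (convex_iInter fun x => convex_halfSpace_ge
      ⟨fun M N => by simp [add_mulVec], fun a M => by simp [smul_mulVec]⟩ _)
    simp_all [IsHermitian]
  have hSK : S ⊆ K := fun M hM => ⟨(hS M hM).1, Set.mem_iInter.mpr (hS M hM).2⟩
  have hGK : G ∈ K := closure_minimal (convexHull_min hSK hK_convex) hK_closed hG
  exact .of_dotProduct_mulVec_pos hGK.1 fun x hx => (mul_pos hc
    (dotProduct_star_self_pos_iff.mpr hx)).trans_le (Set.mem_iInter.mp hGK.2 x)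

variable [DecidableEq n]

theorem exists_conj_zpow_mem_unitaryGroup_of_posDef {𝕜 : Type*} [RCLike 𝕜] {G : Matrix n n 𝕜}
    (hG : G.PosDef) (A : GL n 𝕜) (hA : (A : Matrix n n 𝕜)ᴴ * G * A = G) :
    ∃ P : Matrix n n 𝕜, IsUnit P ∧
      ∀ k : ℤ, P⁻¹ * ((A ^ k : GL n 𝕜) : Matrix n n 𝕜) * P ∈ unitaryGroup n 𝕜 := by
  open scoped MatrixOrder in
  obtain ⟨_, ⟨u, rfl⟩, rfl⟩ :=
    CStarAlgebra.isStrictlyPositive_iff_eq_star_mul_self.mp hG.isStrictlyPositive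
  have hV : ((u * A * u⁻¹ : GL n 𝕜) : Matrix n n 𝕜) ∈ unitaryGroup n 𝕜 := by
    rw [mem_unitaryGroup_iff']
    calc star ((u * A * u⁻¹ : GL n 𝕜) : Matrix n n 𝕜) * ↑(u * A * u⁻¹)
        = star ↑u⁻¹ * ((A : Matrix n n 𝕜)ᴴ * (star ↑u * ↑u) * A) * ↑u⁻¹ := by
          simp only [Units.val_mul, star_mul, star_eq_conjTranspose, mul_assoc]
      _ = star (↑u * ↑u⁻¹) * (↑u * ↑u⁻¹ : Matrix n n 𝕜) := by
          rw [hA, star_mul]; simp only [mul_assoc]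
      _ = 1 := by simp
  refine ⟨↑u⁻¹, Units.isUnit _, fun k => ?_⟩
  have hW : Unitary.toUnits ⟨_, hV⟩ = u * A * u⁻¹ := Units.ext rfl
  rw [← coe_units_inv, inv_inv, ← Units.val_mul, ← Units.val_mul, ← conj_zpow, ← hW, ← map_zpow]
  exact SetLike.coe_mem _

theorem star_dotProduct_self_le_mul {M N : Matrix n n ℝ} (hNM : N * M = 1) {C : ℝ} (hN : ‖N‖ ≤ C)
    (x : n → ℝ) : star x ⬝ᵥ x ≤ C ^ 2 * (star x ⬝ᵥ (Mᴴ * M) *ᵥ x) := by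
  have hnorm_sq (v : n → ℝ) : ‖(EuclideanSpace.equiv n ℝ).symm v‖ ^ 2 = star v ⬝ᵥ v := by
    rw [EuclideanSpace.norm_sq_eq]; simp [dotProduct, sq]
  have hquad : star x ⬝ᵥ (Mᴴ * M) *ᵥ x = star (M *ᵥ x) ⬝ᵥ (M *ᵥ x) := by
    rw [← mulVec_mulVec, dotProduct_mulVec, star_mulVec]
  have hbound := l2_opNorm_mulVec N ((EuclideanSpace.equiv n ℝ).symm (M *ᵥ x))
  rw [show N *ᵥ _ = x by simp [mulVec_mulVec, hNM]] at hbound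
  rw [hquad, ← hnorm_sq, ← hnorm_sq, ← mul_pow]
  gcongr
  exact hbound.trans (mul_le_mul_of_nonneg_right hN (norm_nonneg _))

theorem exists_conj_zpow_mem_orthogonalGroup_of_bddAbove (A : GL n ℝ)
    (hA : BddAbove (Set.range fun k : ℤ => ‖((A ^ k : GL n ℝ) : Matrix n n ℝ)‖)) :
    ∃ P : Matrix n n ℝ, IsUnit P ∧
      ∀ k : ℤ, P⁻¹ * ((A ^ k : GL n ℝ) : Matrix n n ℝ) * P ∈ orthogonalGroup n ℝ := by
  obtain ⟨C, hC⟩ := hA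
  replace hC (k : ℤ) : ‖((A ^ k : GL n ℝ) : Matrix n n ℝ)‖ ≤ C := hC ⟨k, rfl⟩
  set Φ := ContinuousLinearMap.mulLeftRight ℝ (Matrix n n ℝ) (A : Matrix n n ℝ)ᴴ A
  have horbit (k : ℕ) :
      Φ^[k] 1 = ((A ^ k : GL n ℝ) : Matrix n n ℝ)ᴴ * ((A ^ k : GL n ℝ) : Matrix n n ℝ) := by
    induction k with
    | zero => simp
    | succ k ih =>
      rw [Function.iterate_succ_apply', ih, pow_succ, Units.val_mul, conjTranspose_mul]
      simp [Φ, mul_assoc]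
  have hbounded : IsBounded (Set.range fun k : ℕ => Φ^[k] 1) := by
    refine isBounded_iff_forall_norm_le.mpr ⟨C * C, ?_⟩
    rintro _ ⟨k, rfl⟩
    dsimp only
    rw [horbit, l2_opNorm_conjTranspose_mul_self, ← zpow_natCast]
    exact mul_le_mul (hC k) (hC k) (norm_nonneg _) ((norm_nonneg _).trans (hC 0))
  obtain ⟨G, hG, hΦG⟩ := Φ.exists_fixedPoint_mem_closure_convexHull_orbit 1 hbounded
  have hGpos : G.PosDef := by
    refine posDef_of_mem_closure_convexHull (c := (max C 1 ^ 2)⁻¹) (by positivity) ?_ hG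
    rintro _ ⟨k, rfl⟩
    dsimp only
    rw [horbit]
    refine ⟨isHermitian_conjTranspose_mul_self _, fun x => ?_⟩
    exact (inv_mul_le_iff₀ (by positivity)).mpr (star_dotProduct_self_le_mul (by simp)
      ((hC (-k)).trans (le_max_left C 1)) x)
  exact exists_conj_zpow_mem_unitaryGroup_of_posDef hGpos A hΦG

end Matrix

theorem stmt_7_general (m : ℕ) (T : GL (Fin m) ℚ)
    (hnotelliptic : ¬ ∃ P : Matrix (Fin m) (Fin m) ℝ, IsUnit P ∧
      ∀ k : ℤ, P⁻¹ * (((T ^ k : GL (Fin m) ℚ) :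
          Matrix (Fin m) (Fin m) ℚ).map ((↑) : ℚ → ℝ)) * P ∈
        Matrix.orthogonalGroup (Fin m) ℝ) :
    ∃ v : Fin m → ℚ, ¬ BddAbove (Set.range fun k : ℤ =>
      Real.sqrt (∑ i, ((((T ^ k : GL (Fin m) ℚ) :
        Matrix (Fin m) (Fin m) ℚ).mulVec v i : ℝ)) ^ 2)) := by
  contrapose! hnotelliptic
  set A := GeneralLinearGroup.map (Rat.castHom ℝ) T
  have hpow (k : ℤ) : ((A ^ k : GL (Fin m) ℝ) : Matrix (Fin m) (Fin m) ℝ) =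
      ((T ^ k : GL (Fin m) ℚ) : Matrix (Fin m) (Fin m) ℚ).map ((↑) : ℚ → ℝ) := by
    rw [← map_zpow]; ext i j; exact GeneralLinearGroup.map_apply _ i j _
  have hcol (k : ℤ) (j : Fin m) :
      ‖toEuclideanCLM (n := Fin m) (𝕜 := ℝ) ((A ^ k : GL (Fin m) ℝ) : Matrix (Fin m) (Fin m) ℝ)
        (EuclideanSpace.basisFun (Fin m) ℝ j)‖ = Real.sqrt (∑ i, ((((T ^ k : GL (Fin m) ℚ) :
          Matrix (Fin m) (Fin m) ℚ).mulVec (Pi.single j 1) i : ℝ)) ^ 2) := by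
    rw [EuclideanSpace.norm_eq]
    simp only [Real.norm_eq_abs, sq_abs]
    simp [hpow]
  obtain ⟨P, hP, hconj⟩ := exists_conj_zpow_mem_orthogonalGroup_of_bddAbove A <|
    (EuclideanSpace.basisFun (Fin m) ℝ).toBasis.bddAbove_range_opNorm (fun k =>
      toEuclideanCLM (n := Fin m) (𝕜 := ℝ) ((A ^ k : GL (Fin m) ℝ) : Matrix (Fin m) (Fin m) ℝ))
      fun j => by simpa only [OrthonormalBasis.coe_toBasis, hcol] using hnotelliptic (Pi.single j 1)
  exact ⟨P, hP, fun k => hpow k ▸ hconj k⟩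

/-- A non-elliptic `T ∈ GL(m, ℚ)` has a vector `v ∈ ℚ^m` with
`{‖T^k v‖ : k ∈ ℤ}` unbounded. -/
theorem stmt_7 (m : ℕ) (hm : 1 ≤ m) (T : GL (Fin m) ℚ)
    (hnotelliptic : ¬ ∃ P : Matrix (Fin m) (Fin m) ℝ, IsUnit P ∧
      ∀ k : ℤ, P⁻¹ * (((T ^ k : GL (Fin m) ℚ) :
          Matrix (Fin m) (Fin m) ℚ).map ((↑) : ℚ → ℝ)) * P ∈
        Matrix.orthogonalGroup (Fin m) ℝ) :
    ∃ v : Fin m → ℚ, ¬ BddAbove (Set.range fun k : ℤ =>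
      Real.sqrt (∑ i, ((((T ^ k : GL (Fin m) ℚ) :
        Matrix (Fin m) (Fin m) ℚ).mulVec v i : ℝ)) ^ 2)) :=
  stmt_7_general m T hnotelliptic
end

section
/- Let A be the companion matrix of the polynomial x⁴ − 2x³ − 2x + 1 acting on ℚ⁴. This polynomial is irreducible over ℚ and has four distinct complex roots, exactly two of which lie on the unit circle. -/
/-!
Over any commutative ring containing a square root `s` of `3`,
`X⁴ - 2X³ - 2X + 1 = (X² - (1 + s)X + 1)(X² - (1 - s)X + 1)`.
Over `ℂ` the first factor has discriminant `2√3 > 0`, so its roots are two reals `r₁ > 1 > r₂ > 0`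
with `r₁ r₂ = 1`; the second has discriminant `-2√3 < 0`, so its roots are a non-real conjugate
pair `w, w̄` with `w w̄ = 1`, i.e. on the unit circle.

By Gauss's lemma irreducibility over `ℚ` reduces to `ℤ`. An integer root would be a unit, and
`±1` are not roots; a product of two monic integer quadratics `(X² + aX + b)(X² + cX + d)` would
have `bd = 1`, and evaluating at `±1` then forces `(a + 1)² = 3`.
-/

open Polynomial

theorem Polynomial.Monic.eq_X_sq_add_C_mul_X_add_C {R : Type*} [CommSemiring R] {f : R[X]}
    (hf : f.Monic) (h : f.natDegree = 2) :
    f = X ^ 2 + C (f.coeff 1) * X + C (f.coeff 0) := by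
  conv_lhs => rw [hf.as_sum, h]
  simp [Finset.sum_range_succ]; ring

namespace Quartic

noncomputable def quartic (R : Type*) [CommRing R] : R[X] := X ^ 4 - C 2 * X ^ 3 - C 2 * X + 1

section Ring

variable {R : Type*} [CommRing R]

theorem map_quartic {S : Type*} [CommRing S] (f : R →+* S) : (quartic R).map f = quartic S := by
  simp [quartic, map_ofNat]

theorem eval_quartic (x : R) : (quartic R).eval x = x ^ 4 - 2 * x ^ 3 - 2 * x + 1 := by
  simp [quartic]

theorem quartic_monic [Nontrivial R] : (quartic R).Monic := by
  unfold quartic; monicity!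

theorem natDegree_quartic [Nontrivial R] : (quartic R).natDegree = 4 := by
  unfold quartic; compute_degree!

theorem quartic_eq_mul_of_sq_eq_three {s : R} (hs : s ^ 2 = 3) :
    quartic R = (X ^ 2 - C (1 + s) * X + 1) * (X ^ 2 - C (1 - s) * X + 1) := by
  have hC : C s ^ 2 = 3 := by rw [← C_pow, hs]; rfl
  simp only [quartic, C_add, C_sub, C_1, C_ofNat]
  linear_combination (X ^ 2 : R[X]) * hC

theorem X_sub_C_mul_X_sub_C (u v : R) :
    (X - C u) * (X - C v) = X ^ 2 - C (u + v) * X + C (u * v) := by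
  simp only [C_add, C_mul]; ring

end Ring

section Irreducible

theorem eval_quartic_int_ne_zero (a : ℤ) : (quartic ℤ).eval a ≠ 0 := by
  rw [eval_quartic]
  intro h
  have ha : IsUnit a := IsUnit.of_mul_eq_one (2 * a ^ 2 + 2 - a ^ 3) (by linear_combination -h)
  rcases Int.isUnit_iff.mp ha with rfl | rfl <;> norm_num at h

theorem quadratic_mul_quadratic_ne_quartic (a b c d : ℤ) :
    (X ^ 2 + C a * X + C b) * (X ^ 2 + C c * X + C d) ≠ quartic ℤ := by
  intro h
  have e₀ := congrArg (eval 0) h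
  have e₁ := congrArg (eval 1) h
  have e₂ := congrArg (eval (-1)) h
  simp only [eval_quartic, eval_mul, eval_add, eval_pow, eval_X, eval_C] at e₀ e₁ e₂
  norm_num at e₀ e₁ e₂
  rcases Int.mul_eq_one_iff_eq_one_or_neg_one.mp e₀ with ⟨rfl, rfl⟩ | ⟨rfl, rfl⟩
  · have hsum : a + c = -2 := by nlinarith
    have hprod : a * c = -2 := by nlinarith
    have hsq : (a + 1) ^ 2 = 3 := by linear_combination a * hsum - hprod
    have hlo : -2 < a + 1 := by nlinarith
    have hhi : a + 1 < 2 := by nlinarith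
    interval_cases h : a + 1 <;> omega
  · nlinarith

theorem irreducible_quartic_int : Irreducible (quartic ℤ) := by
  rw [quartic_monic.irreducible_iff_natDegree', natDegree_quartic]
  refine ⟨fun h => by simpa [natDegree_quartic] using congrArg natDegree h, ?_⟩
  intro f g hf hg hfg hdeg
  have hsum : f.natDegree + g.natDegree = 4 := by
    rw [← hf.natDegree_mul hg, hfg, natDegree_quartic]
  obtain hg₁ | hg₂ : g.natDegree = 1 ∨ g.natDegree = 2 := by simp at hdeg; omega
  · have hroot := congrArg (eval (-g.coeff 0)) hfg
    rw [hg.eq_X_add_C hg₁] at hroot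
    simp at hroot
    exact eval_quartic_int_ne_zero _ hroot.symm
  · rw [hf.eq_X_sq_add_C_mul_X_add_C (by omega), hg.eq_X_sq_add_C_mul_X_add_C hg₂] at hfg
    exact quadratic_mul_quadratic_ne_quartic _ _ _ _ hfg

theorem irreducible_quartic_rat : Irreducible (quartic ℚ) := by
  rw [← map_quartic (algebraMap ℤ ℚ)]
  exact quartic_monic.irreducible_iff_irreducible_map_fraction_map.mp irreducible_quartic_int

end Irreducible

section Roots

open Complex ComplexConjugate

noncomputable def r₁ : ℝ := (1 + √3 + √(2 * √3)) / 2

noncomputable def r₂ : ℝ := (1 + √3 - √(2 * √3)) / 2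

noncomputable def w : ℂ := ⟨(1 - √3) / 2, √(2 * √3) / 2⟩

theorem sq_sqrt_two_mul_sqrt_three : √(2 * √3) ^ 2 = 2 * √3 :=
  Real.sq_sqrt (by positivity)

theorem r₁_add_r₂ : r₁ + r₂ = 1 + √3 := by
  unfold r₁ r₂; ring

theorem r₁_mul_r₂ : r₁ * r₂ = 1 := by
  unfold r₁ r₂
  linear_combination (Real.sq_sqrt (show (0 : ℝ) ≤ 3 by norm_num) - sq_sqrt_two_mul_sqrt_three) / 4

theorem one_lt_r₁ : 1 < r₁ := by
  have : 1 < √3 := by rw [Real.lt_sqrt zero_le_one]; norm_num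
  unfold r₁; linarith [Real.sqrt_nonneg (2 * √3)]

theorem r₂_mem_Ioo : r₂ ∈ Set.Ioo 0 1 := by
  have h := r₁_mul_r₂
  constructor <;> nlinarith [one_lt_r₁]

theorem w_add_conj : w + conj w = ((1 - √3 : ℝ) : ℂ) := by
  rw [add_conj]; congr 1; simp [w]; ring

theorem normSq_w : normSq w = 1 := by
  simp only [w, normSq_mk]
  linear_combination (Real.sq_sqrt (show (0 : ℝ) ≤ 3 by norm_num) + sq_sqrt_two_mul_sqrt_three) / 4

theorem norm_w : ‖w‖ = 1 := by
  rw [norm_def, normSq_w, Real.sqrt_one]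

theorem w_im_pos : 0 < w.im := by
  simp only [w]; positivity

theorem w_ne_conj : w ≠ conj w := fun h => w_im_pos.ne' (conj_eq_iff_im.mp h.symm)

theorem quartic_complex_eq :
    quartic ℂ = (X - C (r₁ : ℂ)) * (X - C (r₂ : ℂ)) * ((X - C w) * (X - C (conj w))) := by
  have hs : ((√3 : ℝ) : ℂ) ^ 2 = 3 := by
    rw [← ofReal_pow, Real.sq_sqrt (by norm_num)]; norm_num
  rw [quartic_eq_mul_of_sq_eq_three hs, X_sub_C_mul_X_sub_C, X_sub_C_mul_X_sub_C, ← ofReal_add,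
    ← ofReal_mul, r₁_add_r₂, r₁_mul_r₂, w_add_conj, mul_conj, normSq_w]
  simp

theorem roots_quartic_complex : (quartic ℂ).roots = {(r₁ : ℂ), (r₂ : ℂ), w, conj w} := by
  rw [quartic_complex_eq, ← roots_multiset_prod_X_sub_C {(r₁ : ℂ), (r₂ : ℂ), w, conj w}]
  simp only [Multiset.insert_eq_cons, Multiset.map_cons, Multiset.map_singleton,
    Multiset.prod_cons, Multiset.prod_singleton, mul_assoc]

theorem nodup_roots_quartic_complex : (quartic ℂ).roots.Nodup := by
  have hr : (r₁ : ℂ) ≠ r₂ := ofReal_injective.ne (r₂_mem_Ioo.2.trans one_lt_r₁).ne'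
  have hw : ∀ x : ℝ, (x : ℂ) ≠ w := fun x h => w_im_pos.ne' (by simp [← h])
  have hw' : ∀ x : ℝ, (x : ℂ) ≠ conj w := fun x h => w_im_pos.ne' (by simpa using congrArg im h)
  simp [roots_quartic_complex, hr, hw, hw', w_ne_conj]

theorem filter_norm_eq_one_roots_quartic_complex :
    (quartic ℂ).roots.toFinset.filter (fun z => ‖z‖ = 1) = {w, conj w} := by
  have h₁ : |r₁| ≠ 1 := by
    rw [abs_of_pos (by linarith [one_lt_r₁])]; exact one_lt_r₁.ne'
  have h₂ : |r₂| ≠ 1 := by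
    rw [abs_of_pos r₂_mem_Ioo.1]; exact r₂_mem_Ioo.2.ne
  rw [roots_quartic_complex]
  simp [Finset.filter_insert, Finset.filter_singleton, h₁, h₂, norm_w]

end Roots

end Quartic

open Quartic in
/-- The polynomial `x⁴ − 2x³ − 2x + 1` is irreducible over ℚ and has four
distinct complex roots, exactly two of which lie on the unit circle. -/
theorem stmt_8 :
    let p : ℚ[X] := X ^ 4 - C 2 * X ^ 3 - C 2 * X + 1
    Irreducible p ∧
      (p.map (algebraMap ℚ ℂ)).roots.toFinset.card = 4 ∧
      (p.map (algebraMap ℚ ℂ)).roots.card = 4 ∧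
      ((p.map (algebraMap ℚ ℂ)).roots.toFinset.filter
        (fun z => ‖z‖ = 1)).card = 2 := by
  intro p
  have hp : p.map (algebraMap ℚ ℂ) = quartic ℂ := map_quartic _
  rw [hp]
  refine ⟨irreducible_quartic_rat, ?_, ?_, ?_⟩
  · rw [Multiset.toFinset_card_of_nodup nodup_roots_quartic_complex, roots_quartic_complex]; rfl
  · rw [roots_quartic_complex]; rfl
  · rw [filter_norm_eq_one_roots_quartic_complex, Finset.card_pair w_ne_conj]
end

section
/- Let A = (1/5)·[[3, −4], [4, 3]] ∈ GL(2, ℚ), and let i ≤ j be integers. If v ∈ ℚ² is such that A^i v ∈ ℤ² and A^j v ∈ ℤ², then ‖A^i v‖² is divisible by 5^(j−i). -/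
open Matrix

namespace Stmt10Aux



lemma qp_ne : (⟨2,1⟩ : GaussianInt) ≠ 0 := by
  intro h
  have := congrArg Zsqrtd.re h
  simp at this

lemma norm_pm : (⟨2,-1⟩ : GaussianInt).norm = 5 := by simp [Zsqrtd.norm]

set_option synthInstance.maxHeartbeats 1000000 in
lemma prime_pm : Prime (⟨2,-1⟩ : GaussianInt) := by
  rw [← UniqueFactorizationMonoid.irreducible_iff_prime]
  constructor
  · intro h
    have := Zsqrtd.norm_eq_one_iff.mpr h
    rw [norm_pm] at this
    simp at this
  · intro a b hab
    have h5 : a.norm * b.norm = 5 := by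
      rw [← Zsqrtd.norm_mul, ← hab, norm_pm]
    have h0a : 0 ≤ a.norm := Zsqrtd.norm_nonneg (by norm_num) a
    have h0b : 0 ≤ b.norm := Zsqrtd.norm_nonneg (by norm_num) b
    have hcase : a.norm = 1 ∨ b.norm = 1 := by
      have hd : a.norm ∣ 5 := ⟨b.norm, h5.symm⟩
      have hle : a.norm ≤ 5 := Int.le_of_dvd (by norm_num) hd
      interval_cases h : a.norm <;> omega
    rcases hcase with h | h
    · exact Or.inl ((Zsqrtd.norm_eq_one_iff' (by norm_num) a).mp h)
    · exact Or.inr ((Zsqrtd.norm_eq_one_iff' (by norm_num) b).mp h)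

lemma not_pm_dvd_qp : ¬ (⟨2,-1⟩ : GaussianInt) ∣ (⟨2,1⟩ : GaussianInt) := by
  rintro ⟨c, hc⟩
  have h1 := congrArg Zsqrtd.re hc
  have h2 := congrArg Zsqrtd.im hc
  simp [Zsqrtd.re_mul, Zsqrtd.im_mul] at h1 h2
  omega

lemma intCast_mul (c : ℤ) (x : GaussianInt) : ((c : ℤ) : GaussianInt) * x = ⟨c * x.re, c * x.im⟩ := by
  ext <;> simp [Zsqrtd.re_mul, Zsqrtd.im_mul]

lemma key (n : ℕ) (a : GaussianInt) (b0 b1 : ℤ)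
    (h : (⟨3,4⟩ : GaussianInt) ^ n * a = ⟨5 ^ n * b0, 5 ^ n * b1⟩) :
    ∃ z : ℤ, a.norm = 5 ^ n * z := by
  have h34 : (⟨3,4⟩ : GaussianInt) = ⟨2,1⟩ * ⟨2,1⟩ := by
    ext <;> simp [Zsqrtd.re_mul, Zsqrtd.im_mul]
  have h5G : ((5 : ℤ) : GaussianInt) = ⟨2,1⟩ * ⟨2,-1⟩ := by
    ext <;> simp [Zsqrtd.re_mul, Zsqrtd.im_mul]
  have hb : (⟨(5:ℤ) ^ n * b0, (5:ℤ) ^ n * b1⟩ : GaussianInt) = (⟨2,1⟩ : GaussianInt) ^ n * ((⟨2,-1⟩ : GaussianInt) ^ n * ⟨b0, b1⟩) := by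
    rw [← intCast_mul ((5:ℤ)^n) (⟨b0,b1⟩ : GaussianInt), ← mul_assoc, ← mul_pow, ← h5G]
    push_cast
    rfl
  have hcan : (⟨2,1⟩ : GaussianInt) ^ n * a = (⟨2,-1⟩ : GaussianInt) ^ n * ⟨b0, b1⟩ := by
    apply mul_left_cancel₀ (pow_ne_zero n qp_ne)
    calc (⟨2,1⟩ : GaussianInt) ^ n * ((⟨2,1⟩ : GaussianInt) ^ n * a)
        = ((⟨2,1⟩ : GaussianInt) * ⟨2,1⟩) ^ n * a := by rw [mul_pow, mul_assoc]
      _ = (⟨2,1⟩ : GaussianInt) ^ n * ((⟨2,-1⟩ : GaussianInt) ^ n * ⟨b0, b1⟩) := by rw [← h34, h, hb]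
  have hdvd : (⟨2,-1⟩ : GaussianInt) ^ n ∣ (⟨2,1⟩ : GaussianInt) ^ n * a := ⟨⟨b0, b1⟩, hcan⟩
  have hda : (⟨2,-1⟩ : GaussianInt) ^ n ∣ a :=
    prime_pm.pow_dvd_of_dvd_mul_left n
      (fun hd => not_pm_dvd_qp (prime_pm.dvd_of_dvd_pow hd)) hdvd
  obtain ⟨c, rfl⟩ := hda
  refine ⟨c.norm, ?_⟩
  rw [Zsqrtd.norm_mul]
  congr 1
  have := map_pow (Zsqrtd.normMonoidHom (d := -1)) (⟨2,-1⟩ : GaussianInt) n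
  simpa [Zsqrtd.normMonoidHom, norm_pm] using this

def Amat : Matrix (Fin 2) (Fin 2) ℚ := !![3/5, -4/5; 4/5, 3/5]

lemma bridge (n : ℕ) (u : Fin 2 → ℤ) :
    (Amat ^ n).mulVec (fun k => (u k : ℚ)) 0 * 5 ^ n =
      ((((⟨3,4⟩ : GaussianInt) ^ n * ⟨u 0, u 1⟩).re : ℤ) : ℚ) ∧
    (Amat ^ n).mulVec (fun k => (u k : ℚ)) 1 * 5 ^ n =
      ((((⟨3,4⟩ : GaussianInt) ^ n * ⟨u 0, u 1⟩).im : ℤ) : ℚ) := by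
  induction n with
  | zero => simp
  | succ n ih =>
    obtain ⟨h0, h1⟩ := ih
    have hpow : Amat ^ (n + 1) = Amat * Amat ^ n := by rw [pow_succ']
    have hg : (⟨3,4⟩ : GaussianInt) ^ (n + 1) * ⟨u 0, u 1⟩ = (⟨3,4⟩ : GaussianInt) * ((⟨3,4⟩ : GaussianInt) ^ n * ⟨u 0, u 1⟩) := by
      rw [pow_succ', mul_assoc]
    set g : GaussianInt := (⟨3,4⟩ : GaussianInt) ^ n * ⟨u 0, u 1⟩ with hgdef
    have hre : ((⟨3,4⟩ : GaussianInt) ^ (n + 1) * ⟨u 0, u 1⟩).re = 3 * g.re - 4 * g.im := by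
      rw [hg]; simp [Zsqrtd.re_mul]; try ring
    have him : ((⟨3,4⟩ : GaussianInt) ^ (n + 1) * ⟨u 0, u 1⟩).im = 4 * g.re + 3 * g.im := by
      rw [hg]; simp [Zsqrtd.im_mul]; try ring
    rw [hpow, ← Matrix.mulVec_mulVec, hre, him]
    set y : Fin 2 → ℚ := (Amat ^ n).mulVec (fun k => (u k : ℚ)) with hy
    have hc0 : Amat.mulVec y 0 = 3/5 * y 0 - 4/5 * y 1 := by
      simp [Amat, Matrix.mulVec, dotProduct, Fin.sum_univ_two]; try ring
    have hc1 : Amat.mulVec y 1 = 4/5 * y 0 + 3/5 * y 1 := by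
      simp [Amat, Matrix.mulVec, dotProduct, Fin.sum_univ_two]; try ring
    constructor
    · rw [hc0]; push_cast
      rw [← h0, ← h1]; ring
    · rw [hc1]; push_cast
      rw [← h0, ← h1]; ring

end Stmt10Aux

open Stmt10Aux in
/-- If `A = (1/5)·[[3,−4],[4,3]]`, `i ≤ j` are integers, and `A^i v, A^j v ∈ ℤ²`,
then `‖A^i v‖²` is divisible by `5^(j−i)`. -/
theorem stmt_10 (i j : ℤ) (hij : i ≤ j) (v : Fin 2 → ℚ)
    (hi : ∃ u : Fin 2 → ℤ,
      ((!![3/5, -4/5; 4/5, 3/5] : Matrix (Fin 2) (Fin 2) ℚ) ^ i).mulVec v =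
        fun k => (u k : ℚ))
    (hj : ∃ w : Fin 2 → ℤ,
      ((!![3/5, -4/5; 4/5, 3/5] : Matrix (Fin 2) (Fin 2) ℚ) ^ j).mulVec v =
        fun k => (w k : ℚ)) :
    ∃ z : ℤ,
      (((!![3/5, -4/5; 4/5, 3/5] : Matrix (Fin 2) (Fin 2) ℚ) ^ i).mulVec v 0) ^ 2 +
        (((!![3/5, -4/5; 4/5, 3/5] : Matrix (Fin 2) (Fin 2) ℚ) ^ i).mulVec v 1) ^ 2 =
        (5 : ℚ) ^ (j - i).toNat * (z : ℚ) := by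
  obtain ⟨u, hu⟩ := hi
  obtain ⟨w, hw⟩ := hj
  have hA : (!![3/5, -4/5; 4/5, 3/5] : Matrix (Fin 2) (Fin 2) ℚ) = Amat := rfl
  rw [hA] at hu hw ⊢
  have hdet : IsUnit Amat.det := by
    have : Amat.det = 1 := by
      rw [Amat, Matrix.det_fin_two_of]; norm_num
    rw [this]; exact isUnit_one
  set N := (j - i).toNat with hNdef
  have hN : (N : ℤ) = j - i := Int.toNat_of_nonneg (sub_nonneg.mpr hij)
  have hAj : Amat ^ j = Amat ^ (N : ℤ) * Amat ^ i := by
    rw [← Matrix.zpow_add hdet, hN, sub_add_cancel]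
  have h2 : (Amat ^ N).mulVec (fun k => (u k : ℚ)) = fun k => (w k : ℚ) := by
    rw [← zpow_natCast Amat N, ← hu, Matrix.mulVec_mulVec, ← hAj, hw]
  obtain ⟨b0, b1⟩ := bridge N u
  rw [h2] at b0 b1
  beta_reduce at b0 b1
  have e0 : ((⟨3,4⟩ : GaussianInt) ^ N * ⟨u 0, u 1⟩).re = 5 ^ N * w 0 := by
    exact_mod_cast b0.symm.trans (mul_comm _ _)
  have e1 : ((⟨3,4⟩ : GaussianInt) ^ N * ⟨u 0, u 1⟩).im = 5 ^ N * w 1 := by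
    exact_mod_cast b1.symm.trans (mul_comm _ _)
  have hG : (⟨3,4⟩ : GaussianInt) ^ N * ⟨u 0, u 1⟩ = ⟨5 ^ N * w 0, 5 ^ N * w 1⟩ := by
    ext
    · exact e0
    · exact e1
  obtain ⟨z, hz⟩ := key N (⟨u 0, u 1⟩ : GaussianInt) (w 0) (w 1) hG
  refine ⟨z, ?_⟩
  have hnorm : ((⟨u 0, u 1⟩ : GaussianInt)).norm = u 0 ^ 2 + u 1 ^ 2 := by
    simp [Zsqrtd.norm]; try ring
  rw [hnorm] at hz
  have hu0 : (Amat ^ i).mulVec v 0 = (u 0 : ℚ) := congrFun hu 0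
  have hu1 : (Amat ^ i).mulVec v 1 = (u 1 : ℚ) := congrFun hu 1
  rw [hu0, hu1]
  exact_mod_cast congrArg (fun t : ℤ => (t : ℚ)) hz
end

section
/- Let p, q be Gaussian integers with p and q coprime in ℤ[i] and |p| = |q| > 1, and let r = p/q. Let P₁, P₂ be integer polynomials such that every nonzero term of P₁ has degree at most d₁ and every nonzero term of P₂ has degree at least d₂, with d₂ > d₁. If P₁(r) + P₂(r) = 0 and P₁(r) ≠ 0, then the sum of the absolute values of the coefficients of P₁ is at least |p|^(d₂ − d₁). -/
/-!
Homogenize: `A = q^d₁ P₁(p/q)` and `B = q^n P₂(p/q)` (with `n = deg P₂`) are Gaussian integers,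
and every term of `B` is divisible by `p^d₂`. From `P₁(r) = -P₂(r)` we get `A q^n = -B q^d₁`,
so coprimality of `p` and `q` gives `p^d₂ ∣ A`. Since `A ≠ 0`, `|A| ≥ |p|^d₂`, while
`|A| = |q|^d₁ |P₁(r)| = |p|^d₁ |P₁(r)|`. Finally `|r| = 1`, so `|P₁(r)|` is at most the sum of
the absolute values of the coefficients of `P₁`.
-/

open Polynomial

namespace Polynomial

variable {R : Type*} [CommSemiring R]

lemma aeval_homogenize_of_ne_zero {K : Type*} [Semifield K] [Algebra R K] {P : R[X]} {n : ℕ}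
    (hn : P.natDegree ≤ n) (x : Fin 2 → K) (hx : x 1 ≠ 0) :
    MvPolynomial.aeval x (P.homogenize n) = aeval (x 0 / x 1) P * x 1 ^ n := by
  have := eval_homogenize (p := P.map (algebraMap R K)) (natDegree_map_le.trans hn) x hx
  rwa [homogenize_map, MvPolynomial.eval_map, eval_map_algebraMap] at this

lemma pow_dvd_aeval_homogenize_natDegree [IsDomain R] {A : Type*} [CommSemiring A] [Algebra R A]
    {P : R[X]} {m : ℕ} (hP : ∀ k, P.coeff k ≠ 0 → m ≤ k) (x : Fin 2 → A) :
    x 0 ^ m ∣ MvPolynomial.aeval x (P.homogenize P.natDegree) := by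
  have hX : (X ^ m : R[X]) ∣ P :=
    X_pow_dvd_iff.2 fun k hk => by_contra fun h => hk.not_ge (hP k h)
  simpa using _root_.map_dvd (MvPolynomial.aeval x) (homogenize_dvd hX)

lemma norm_aeval_le_sum_abs_coeff {A : Type*} [SeminormedRing A] [NormOneClass A]
    [NormSMulClass ℤ A] (P : ℤ[X]) {z : A} (hz : ‖z‖ ≤ 1) :
    ‖aeval z P‖ ≤ ∑ k ∈ Finset.range (P.natDegree + 1), |(P.coeff k : ℝ)| := by
  rw [aeval_eq_sum_range]
  refine (norm_sum_le _ _).trans (Finset.sum_le_sum fun k _ => ?_)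
  rw [norm_smul, Int.norm_eq_abs]
  exact mul_le_of_le_one_right (abs_nonneg _)
    ((norm_pow_le z k).trans (pow_le_one₀ (norm_nonneg _) hz))

end Polynomial

namespace GaussianInt

lemma sq_norm_toComplex (z : GaussianInt) : ‖(z : ℂ)‖ ^ 2 = z.norm := by
  rw [Complex.sq_norm, intCast_real_norm]

lemma norm_toComplex_le_of_dvd {a b : GaussianInt} (h : a ∣ b) (hb : b ≠ 0) :
    ‖(a : ℂ)‖ ≤ ‖(b : ℂ)‖ := by
  obtain ⟨c, rfl⟩ := h
  rw [← pow_le_pow_iff_left₀ (_root_.norm_nonneg _) (_root_.norm_nonneg _) two_ne_zero,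
    sq_norm_toComplex, sq_norm_toComplex, Zsqrtd.norm_mul]
  exact_mod_cast le_mul_of_one_le_right (norm_nonneg a)
    (Int.add_one_le_of_lt (norm_pos.2 (right_ne_zero_of_mul hb)))

lemma toComplex_ne_zero_of_isCoprime {p q : GaussianInt} (hpq : IsCoprime p q)
    (habs : ‖(p : ℂ)‖ = ‖(q : ℂ)‖) : (q : ℂ) ≠ 0 := by
  intro hq
  rw [hq, norm_zero, _root_.norm_eq_zero, toComplex_eq_zero] at habs
  rw [toComplex_eq_zero.1 hq, habs] at hpq
  exact not_isCoprime_zero_zero hpq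

lemma toComplex_aeval (p q : GaussianInt) (H : MvPolynomial (Fin 2) ℤ) :
    (MvPolynomial.aeval ![p, q] H : ℂ) = MvPolynomial.aeval ![(p : ℂ), q] H := by
  refine (MvPolynomial.comp_aeval_apply (f := ![p, q]) toComplex.toIntAlgHom H).trans ?_
  congr 2
  funext i
  fin_cases i <;> rfl

lemma toComplex_aeval_homogenize (p : GaussianInt) {q : GaussianInt} (hq : (q : ℂ) ≠ 0)
    {P : ℤ[X]} {n : ℕ} (hn : P.natDegree ≤ n) :
    (MvPolynomial.aeval ![p, q] (P.homogenize n) : ℂ) = aeval ((p : ℂ) / q) P * q ^ n := by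
  rw [toComplex_aeval, aeval_homogenize_of_ne_zero hn _ hq]
  rfl

end GaussianInt

theorem stmt_11_general (p q : GaussianInt) (hpq : IsCoprime p q)
    (habs : ‖GaussianInt.toComplex p‖ =
      ‖GaussianInt.toComplex q‖)
    (P₁ P₂ : Polynomial ℤ) (d₁ d₂ : ℕ) (hd : d₁ < d₂)
    (hP₁ : ∀ k, P₁.coeff k ≠ 0 → k ≤ d₁)
    (hP₂ : ∀ k, P₂.coeff k ≠ 0 → d₂ ≤ k)
    (r : ℂ) (hr : r = GaussianInt.toComplex p / GaussianInt.toComplex q)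
    (hsum : Polynomial.aeval r P₁ + Polynomial.aeval r P₂ = 0)
    (hne : Polynomial.aeval r P₁ ≠ 0) :
    ‖GaussianInt.toComplex p‖ ^ (d₂ - d₁) ≤
      ∑ k ∈ Finset.range (P₁.natDegree + 1), |(P₁.coeff k : ℝ)| := by
  have hq := GaussianInt.toComplex_ne_zero_of_isCoprime hpq habs
  have hP₁deg : P₁.natDegree ≤ d₁ :=
    natDegree_le_iff_coeff_eq_zero.2 fun k hk => by_contra fun h => hk.not_ge (hP₁ k h)
  set A := MvPolynomial.aeval ![p, q] (P₁.homogenize d₁)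
  set B := MvPolynomial.aeval ![p, q] (P₂.homogenize P₂.natDegree)
  have hA : (A : ℂ) = aeval r P₁ * q ^ d₁ :=
    hr ▸ GaussianInt.toComplex_aeval_homogenize p hq hP₁deg
  have hB : (B : ℂ) = aeval r P₂ * q ^ P₂.natDegree :=
    hr ▸ GaussianInt.toComplex_aeval_homogenize p hq le_rfl
  have hrel : A * q ^ P₂.natDegree = -(B * q ^ d₁) := by
    apply GaussianInt.toComplex_injective
    simp only [map_mul, map_neg, map_pow, hA, hB]
    linear_combination (q : ℂ) ^ (d₁ + P₂.natDegree) * hsum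
  have hdvd : p ^ d₂ ∣ A := by
    refine (hpq.pow (n := P₂.natDegree)).dvd_of_dvd_mul_right ?_
    rw [hrel]
    exact ((pow_dvd_aeval_homogenize_natDegree hP₂ ![p, q]).mul_right _).neg_right
  have hA0 : A ≠ 0 := by
    rintro hA0
    rw [hA0, map_zero, eq_comm, mul_eq_zero] at hA
    exact hA.elim hne (pow_ne_zero _ hq)
  have hnorm : ‖(p : ℂ)‖ ^ d₁ * ‖(p : ℂ)‖ ^ (d₂ - d₁) ≤ ‖(p : ℂ)‖ ^ d₁ * ‖aeval r P₁‖ :=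
    calc ‖(p : ℂ)‖ ^ d₁ * ‖(p : ℂ)‖ ^ (d₂ - d₁) = ‖((p ^ d₂ : GaussianInt) : ℂ)‖ := by
          rw [← pow_add, Nat.add_sub_cancel' hd.le, map_pow, norm_pow]
      _ ≤ ‖(A : ℂ)‖ := GaussianInt.norm_toComplex_le_of_dvd hdvd hA0
      _ = ‖(p : ℂ)‖ ^ d₁ * ‖aeval r P₁‖ := by rw [hA, norm_mul, norm_pow, habs, mul_comm]
  have hr1 : ‖r‖ ≤ 1 := by rw [hr, norm_div, habs, div_self (norm_ne_zero_iff.2 hq)]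
  exact (le_of_mul_le_mul_left hnorm (pow_pos (habs ▸ norm_pos_iff.2 hq) d₁)).trans
    (norm_aeval_le_sum_abs_coeff P₁ hr1)

/-- If `r = p/q` with `p, q` coprime Gaussian integers of equal absolute value
`> 1`, `P₁` has all terms of degree `≤ d₁`, `P₂` has all terms of degree
`≥ d₂ > d₁`, `P₁(r) + P₂(r) = 0` and `P₁(r) ≠ 0`, then the sum of the absolute
values of the coefficients of `P₁` is at least `|p|^(d₂ − d₁)`. -/
theorem stmt_11 (p q : GaussianInt) (hpq : IsCoprime p q)
    (habs : ‖GaussianInt.toComplex p‖ =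
      ‖GaussianInt.toComplex q‖)
    (hgt : 1 < ‖GaussianInt.toComplex p‖)
    (P₁ P₂ : Polynomial ℤ) (d₁ d₂ : ℕ) (hd : d₁ < d₂)
    (hP₁ : ∀ k, P₁.coeff k ≠ 0 → k ≤ d₁)
    (hP₂ : ∀ k, P₂.coeff k ≠ 0 → d₂ ≤ k)
    (r : ℂ) (hr : r = GaussianInt.toComplex p / GaussianInt.toComplex q)
    (hsum : Polynomial.aeval r P₁ + Polynomial.aeval r P₂ = 0)
    (hne : Polynomial.aeval r P₁ ≠ 0) :
    ‖GaussianInt.toComplex p‖ ^ (d₂ - d₁) ≤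
      ∑ k ∈ Finset.range (P₁.natDegree + 1), |(P₁.coeff k : ℝ)| :=
  stmt_11_general p q hpq habs P₁ P₂ d₁ d₂ hd hP₁ hP₂ r hr hsum hne
end
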